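/- arXiv:1706.09510 — 4 statements merged into one kernel-verified Lean document; each statement's English description precedes it below -/
import Mathlib

section
/- Let a ≥ 2 and 0 ≤ k ≤ n, and let X_1,…,X_n be i.i.d. uniform on {1,…,a}. Then E[Y_{n,k}^{(a)}] = C(n,k) · C(a+k−1, a−1) · a^{−k}. Moreover, for fixed a and k, E[Y_{n,k}^{(a)}] ~ ((a+k−1)! / ((a−1)! (k!)^2)) · (n/a)^k as n → ∞. -/
/-!
By linearity of expectation, `E[Y]` is the sum over the `C(n, k)` strictly increasing index maps
`f : Fin k → Fin n` of the probability that `X ∘ f` is weakly increasing. Since `X ∘ f` is uniform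
on `Fin k → Fin a` and weakly increasing words of length `k` correspond to multisets of size `k`,
that probability is `C(a + k - 1, k) / a ^ k`. The asymptotics then come from `C(n, k) ~ n ^ k / k!`.
-/

open Finset Filter

noncomputable section
attribute [local instance] Classical.propDecidable

/-- Probability weight of the word `x` when the letters are i.i.d. with distribution `p`. -/
def wordWt {n a : ℕ} (p : Fin a → ℝ) (x : Fin n → Fin a) : ℝ := ∏ i, p (x i)

/-- Number of weakly increasing subsequences of length `k` of the word `x`. -/
def numWIS (n a k : ℕ) (x : Fin n → Fin a) : ℕ :=
  (univ.filter fun f : Fin k → Fin n => StrictMono f ∧ Monotone (x ∘ f)).card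

/-- Expected number of weakly increasing subsequences of length `k`. -/
def expY (n a k : ℕ) (p : Fin a → ℝ) : ℝ :=
  ∑ x : Fin n → Fin a, wordWt p x * (numWIS n a k x : ℝ)

section LinearOrder

variable {α : Type*} [LinearOrder α]

def strictMonoFinEquiv (k : ℕ) :
    {f : Fin k → α // StrictMono f} ≃ {s : Finset α // s.card = k} where
  toFun f := ⟨univ.image f.1, by rw [card_image_of_injective _ f.2.injective, card_fin]⟩
  invFun s := ⟨s.1.orderEmbOfFin s.2, (s.1.orderEmbOfFin s.2).strictMono⟩
  left_inv f := Subtype.ext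
    (orderEmbOfFin_unique _ (fun i => mem_image_of_mem f.1 (mem_univ i)) f.2).symm
  right_inv s := Subtype.ext <| coe_injective <| by
    simp only [coe_image, coe_univ, Set.image_univ, range_orderEmbOfFin]

theorem card_strictMono_fin [Finite α] (k : ℕ) :
    Nat.card {f : Fin k → α // StrictMono f} = (Nat.card α).choose k := by
  have := Fintype.ofFinite α
  rw [Nat.card_congr (strictMonoFinEquiv k), Nat.card_eq_fintype_card, Fintype.card_finset_len,
    Nat.card_eq_fintype_card]

def monotoneFinEquivSym (k : ℕ) : {g : Fin k → α // Monotone g} ≃ Sym α k where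
  toFun g := ⟨(List.ofFn g.1 : Multiset α), by simp⟩
  invFun s := ⟨fun i => (s.1.sort (· ≤ ·)).get (Fin.cast (by rw [Multiset.length_sort, s.2]) i),
    fun _ _ hij => List.Pairwise.rel_get_of_le (s.1.pairwise_sort _) hij⟩
  left_inv := by
    rintro ⟨g, hg⟩
    have hsort : (List.ofFn g : Multiset α).sort (· ≤ ·) = List.ofFn g :=
      List.Perm.eq_of_pairwise' (Multiset.pairwise_sort _ _)
        (List.sortedLE_ofFn_iff.2 hg).pairwise (Multiset.coe_eq_coe.1 (Multiset.sort_eq _ _))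
    ext i
    show List.get _ _ = g i
    rw [List.get_of_eq hsort, List.get_ofFn]
    rfl
  right_inv := by
    rintro ⟨m, hm⟩
    apply Subtype.ext
    show ((List.ofFn _ : List α) : Multiset α) = m
    rw [← List.ofFn_congr (by rw [Multiset.length_sort, hm]), List.ofFn_get, Multiset.sort_eq]

theorem card_monotone_fin (k : ℕ) :
    Nat.card {g : Fin k → α // Monotone g} = (Nat.card α + k - 1).choose k := by
  rw [Nat.card_congr (monotoneFinEquivSym k), Sym.natCard_sym_eq_choose]

end LinearOrder

theorem card_comp_of_injective {ι κ β : Type*} [Finite κ] {f : ι → κ}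
    (hf : Function.Injective f) (P : (ι → β) → Prop) :
    Nat.card {x : κ → β // P (x ∘ f)}
      = Nat.card {g : ι → β // P g} * Nat.card β ^ (Nat.card κ - Nat.card ι) := by
  -- `e x = (x ∘ f, x restricted to the complement of the range of f)`
  let e : (κ → β) ≃ (ι → β) × ({j // j ∉ Set.range f} → β) :=
    (Equiv.piEquivPiSubtypeProd (· ∈ Set.range f) _).trans
      (Equiv.prodCongr ((Equiv.ofInjective f hf).arrowCongr (Equiv.refl β)).symm (Equiv.refl _))
  have hcompl : Nat.card {j // j ∉ Set.range f} = Nat.card κ - Nat.card ι := by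
    change Nat.card ((Set.range f)ᶜ : Set κ) = _
    rw [Nat.card_coe_set_eq, Set.ncard_compl, ← Nat.card_coe_set_eq,
      Nat.card_range_of_injective hf]
  rw [Nat.card_congr (e.subtypeEquiv (p := fun x => P (x ∘ f)) (q := fun y => P y.1)
      fun _ => Iff.rfl),
    Nat.card_congr Equiv.prodSubtypeFstEquivSubtypeProd, Nat.card_prod, Nat.card_fun, hcompl]

theorem sum_numWIS (n a k : ℕ) :
    ∑ x, numWIS n a k x = n.choose k * ((a + k - 1).choose k * a ^ (n - k)) := by
  have hcount (f : Fin k → Fin n) (hf : StrictMono f) :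
      #{x : Fin n → Fin a | Monotone (x ∘ f)} = (a + k - 1).choose k * a ^ (n - k) := by
    rw [← Fintype.card_subtype, ← Nat.card_eq_fintype_card,
      card_comp_of_injective hf.injective Monotone, card_monotone_fin]
    simp only [Nat.card_eq_fintype_card, Fintype.card_fin]
  calc ∑ x, numWIS n a k x
      = ∑ f : Fin k → Fin n, ∑ x : Fin n → Fin a,
          if StrictMono f ∧ Monotone (x ∘ f) then 1 else 0 := by
        simp only [numWIS, card_filter]
        exact sum_comm
    _ = ∑ f : Fin k → Fin n with StrictMono f, #{x : Fin n → Fin a | Monotone (x ∘ f)} := by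
        rw [sum_filter]
        refine sum_congr rfl fun f _ => ?_
        by_cases hf : StrictMono f <;> simp [hf]
    _ = n.choose k * ((a + k - 1).choose k * a ^ (n - k)) := by
        rw [sum_congr rfl fun f hf => hcount f (mem_filter.1 hf).2, sum_const, smul_eq_mul,
          ← Fintype.card_subtype, ← Nat.card_eq_fintype_card, card_strictMono_fin, Nat.card_fin]

theorem expY_uniform {n a : ℕ} (k : ℕ) (ha : a ≠ 0) (hkn : k ≤ n) :
    expY n a k (fun _ => (a : ℝ)⁻¹)
      = (n.choose k : ℝ) * ((a + k - 1).choose (a - 1) : ℝ) * ((a : ℝ) ^ k)⁻¹ := by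
  have hE : expY n a k (fun _ => (a : ℝ)⁻¹) = ((∑ x, numWIS n a k x : ℕ) : ℝ) / (a : ℝ) ^ n := by
    simp only [expY, wordWt, prod_const, card_univ, Fintype.card_fin, Nat.cast_sum, sum_div]
    refine sum_congr rfl fun x _ => ?_
    rw [inv_pow, inv_mul_eq_div]
  have hpow : (a : ℝ) ^ n = a ^ (n - k) * a ^ k := by rw [← pow_add, Nat.sub_add_cancel hkn]
  rw [hE, sum_numWIS, Nat.choose_symm_of_eq_add (show a + k - 1 = a - 1 + k by omega)]
  push_cast
  rw [hpow]
  field_simp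

theorem factorial_div_mul_div_pow_eq {a : ℕ} (k : ℕ) (ha : a ≠ 0) (x : ℝ) :
    ((a + k - 1).factorial : ℝ) / ((a - 1).factorial * (k.factorial : ℝ) ^ 2) * (x / a) ^ k
      = x ^ k / k.factorial * (((a + k - 1).choose (a - 1) : ℝ) * ((a : ℝ) ^ k)⁻¹) := by
  rw [Nat.cast_choose ℝ (by omega : a - 1 ≤ a + k - 1), show a + k - 1 - (a - 1) = k by omega,
    div_pow]
  field_simp

/-- exact formula and asymptotics for the first moment in the uniform case. -/
theorem stmt2 (a k : ℕ) (ha : 2 ≤ a) :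
    (∀ n : ℕ, k ≤ n →
      expY n a k (fun _ => (a : ℝ)⁻¹)
        = (n.choose k : ℝ) * ((a + k - 1).choose (a - 1) : ℝ) * ((a : ℝ) ^ k)⁻¹)
    ∧ Tendsto (fun n : ℕ =>
        expY n a k (fun _ => (a : ℝ)⁻¹) /
          ((((a + k - 1).factorial : ℝ) / (((a - 1).factorial : ℝ) * ((k.factorial : ℝ)) ^ 2))
            * ((n : ℝ) / (a : ℝ)) ^ k))
        atTop (nhds 1) := by
  have ha0 : a ≠ 0 := by omega
  have hconst : ((a + k - 1).choose (a - 1) : ℝ) * ((a : ℝ) ^ k)⁻¹ ≠ 0 := by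
    have := Nat.choose_pos (show a - 1 ≤ a + k - 1 by omega)
    positivity
  refine ⟨fun n hkn => expY_uniform k ha0 hkn, ?_⟩
  have hchoose := (Asymptotics.isEquivalent_iff_tendsto_one
    (eventually_ne_atTop 0 |>.mono fun n hn => by positivity)).1 (isEquivalent_choose k)
  refine hchoose.congr' ?_
  filter_upwards [eventually_ge_atTop k] with n hkn
  rw [Pi.div_apply, expY_uniform k ha0 hkn, factorial_div_mul_div_pow_eq k ha0,
    mul_assoc, mul_div_mul_right _ _ hconst]
end
end

section
/- Let a ≥ 2 and let X_1,…,X_n be i.i.d. uniform on {1,…,a}. Then the second moment of the total number of weakly increasing subsequences satisfies the upper bound E[(Y_n^{(a)})^2] ≤ Σ_{0 ≤ k_1 + k_2 ≤ n} 2^{k_1} · C(a+k_1−1, a−1) · C(a+k_2−1, a−1) · C(n, k_1) · C(n−k_1, k_2) · a^{−(k_1+k_2)}, where the sum is over pairs of nonnegative integers (k_1, k_2) with k_1 + k_2 ≤ n. -/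
open Finset Filter

noncomputable section
attribute [local instance] Classical.propDecidable

/-- Second moment of the total number of weakly increasing subsequences. -/
def expY2tot (n a : ℕ) (p : Fin a → ℝ) : ℝ :=
  ∑ x : Fin n → Fin a,
    wordWt p x * (∑ k ∈ Finset.range (n + 1), (numWIS n a k x : ℝ)) ^ 2

/-!
The total count `Y` is the number of sets `S ⊆ [n]` on which the word is weakly increasing, so
`E[Y²]` is the sum over pairs `(S, T)` of the probability that the word is weakly increasing on
both. This event lies inside the one for the disjoint sets `S` and `T \ S`, on which the letters are
independent; a uniform word on `k` positions is weakly increasing with probability at most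
`C(a + k - 1, k) / a ^ k`, since such a word is determined by its multiset of letters. Grouping the
pairs by `k₁ = |S|` and `k₂ = |T \ S|`, with `2 ^ k₁` choices of `T ∩ S`, gives the bound.
-/

section Counting

variable {ι α : Type*}

theorem card_strictMono_monotone_comp_eq_card_monotoneOn [Fintype ι] [LinearOrder ι] [Preorder α]
    (x : ι → α) (k : ℕ)
    [DecidablePred fun f : Fin k → ι => StrictMono f ∧ Monotone (x ∘ f)]
    [DecidablePred fun S : Finset ι => MonotoneOn x S] :
    #{f : Fin k → ι | StrictMono f ∧ Monotone (x ∘ f)} =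
      #((powersetCard k univ).filter fun S : Finset ι => MonotoneOn x ↑S) := by
  refine card_bij (fun f _ => image f univ) ?_ ?_ ?_
  · simp only [mem_filter, mem_univ, true_and, mem_powersetCard]
    rintro f ⟨hf, hxf⟩
    refine ⟨⟨subset_univ _, by rw [card_image_of_injective _ hf.injective, card_fin]⟩, ?_⟩
    intro i hi j hj hij
    obtain ⟨p, -, rfl⟩ := mem_image.1 hi
    obtain ⟨q, -, rfl⟩ := mem_image.1 hj
    exact hxf (hf.le_iff_le.1 hij)
  · intro f hf g hg hfg
    simp only [mem_filter, mem_univ, true_and] at hf hg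
    refine (hf.1.range_inj hg.1).1 ?_
    simpa [← Set.image_univ] using congrArg ((↑) : Finset ι → Set ι) hfg
  · intro S hS
    simp only [mem_filter, mem_powersetCard] at hS
    refine ⟨S.orderEmbOfFin hS.1.2, ?_, by convert image_orderEmbOfFin_univ S hS.1.2⟩
    simp only [mem_filter, mem_univ, true_and]
    refine ⟨(S.orderEmbOfFin _).strictMono, fun p q hpq => ?_⟩
    exact hS.2 (orderEmbOfFin_mem S _ p) (orderEmbOfFin_mem S _ q)
      ((S.orderEmbOfFin _).monotone hpq)

theorem sum_card_filter_powersetCard [Fintype ι] (P : Finset ι → Prop) [DecidablePred P] :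
    ∑ k ∈ range (Fintype.card ι + 1), #((powersetCard k univ).filter P) =
      #{S : Finset ι | P S} := by
  rw [card_eq_sum_card_fiberwise (f := card) (t := range (Fintype.card ι + 1))]
  · refine sum_congr rfl fun k _ => ?_
    rw [powersetCard_eq_filter, powerset_univ, filter_filter, filter_filter]
    simp only [and_comm]
  · intro S _
    simpa [Nat.lt_succ_iff] using card_le_univ S

theorem card_monotone_le_choose [Fintype α] [PartialOrder α] (k : ℕ)
    [DecidablePred (Monotone : (Fin k → α) → Prop)] :
    #{f : Fin k → α | Monotone f} ≤ (Fintype.card α + k - 1).choose k := by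
  rw [← Sym.card_sym_eq_choose, ← card_univ]
  refine card_le_card_of_injOn (fun f => (⟨univ.val.map f, by simp⟩ : Sym α k))
    (fun _ _ => mem_univ _) fun f hf g hg hfg => ?_
  simp only [mem_coe, mem_filter, mem_univ, true_and] at hf hg
  have hperm : (List.ofFn f).Perm (List.ofFn g) := by
    simpa [Fin.univ_val_map] using congrArg Subtype.val hfg
  exact List.ofFn_injective (hperm.eq_of_sortedLE hf.sortedLE_ofFn hg.sortedLE_ofFn)

theorem apply_eq_of_comp_orderEmbOfFin_eq [LinearOrder ι] {S : Finset ι} {x y : ι → α}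
    (h : x ∘ S.orderEmbOfFin rfl = y ∘ S.orderEmbOfFin rfl) {i : ι} (hi : i ∈ S) :
    x i = y i := by
  obtain ⟨j, rfl⟩ : i ∈ Set.range (S.orderEmbOfFin rfl) := by simpa using hi
  exact congrFun h j

theorem MonotoneOn.monotone_comp_orderEmbOfFin [LinearOrder ι] [Preorder α] {S : Finset ι}
    {x : ι → α} (hx : MonotoneOn x S) : Monotone (x ∘ S.orderEmbOfFin rfl) :=
  fun _ _ hpq => hx (orderEmbOfFin_mem S rfl _) (orderEmbOfFin_mem S rfl _)
    ((S.orderEmbOfFin rfl).monotone hpq)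

theorem card_monotoneOn_monotoneOn_le [Fintype ι] [DecidableEq ι] [LinearOrder ι] [Fintype α]
    [PartialOrder α] {A B : Finset ι}
    [DecidablePred fun x : ι → α => MonotoneOn x A ∧ MonotoneOn x B] :
    #{x : ι → α | MonotoneOn x A ∧ MonotoneOn x B} ≤
      (Fintype.card α + #A - 1).choose #A * (Fintype.card α + #B - 1).choose #B *
        Fintype.card α ^ #(A ∪ B)ᶜ := by
  calc _ ≤ #(((univ.filter fun f : Fin #A → α => Monotone f) ×ˢ
          (univ.filter fun g : Fin #B → α => Monotone g)) ×ˢ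
          (univ : Finset (Fin #(A ∪ B)ᶜ → α))) := by
        refine card_le_card_of_injOn (fun x => ((x ∘ A.orderEmbOfFin rfl,
          x ∘ B.orderEmbOfFin rfl), x ∘ (A ∪ B)ᶜ.orderEmbOfFin rfl)) ?_ ?_
        · intro x hx
          simp only [mem_coe, mem_filter, mem_univ, true_and] at hx
          simp [hx.1.monotone_comp_orderEmbOfFin, hx.2.monotone_comp_orderEmbOfFin]
        · intro x _ y _ hxy
          simp only [Prod.mk.injEq] at hxy
          obtain ⟨⟨hA, hB⟩, hC⟩ := hxy
          funext i
          by_cases hiA : i ∈ A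
          · exact apply_eq_of_comp_orderEmbOfFin_eq hA hiA
          by_cases hiB : i ∈ B
          · exact apply_eq_of_comp_orderEmbOfFin_eq hB hiB
          exact apply_eq_of_comp_orderEmbOfFin_eq hC (by simp [hiA, hiB])
    _ ≤ _ := by
        rw [card_product, card_product, card_univ, Fintype.card_fun, Fintype.card_fin]
        gcongr <;> exact card_monotone_le_choose _

theorem inv_pow_mul_card_monotoneOn_monotoneOn_le [Fintype ι] [DecidableEq ι] [LinearOrder ι]
    [Fintype α] [PartialOrder α] [Nonempty α] (S T : Finset ι)
    [DecidablePred fun x : ι → α => MonotoneOn x S ∧ MonotoneOn x T] :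
    ((Fintype.card α : ℝ)⁻¹) ^ Fintype.card ι *
        #{x : ι → α | MonotoneOn x S ∧ MonotoneOn x T} ≤
      (Fintype.card α + #S - 1).choose #S * (Fintype.card α + #(T \ S) - 1).choose #(T \ S) *
        ((Fintype.card α : ℝ) ^ (#S + #(T \ S)))⁻¹ := by
  set a := Fintype.card α
  have hcount : #{x : ι → α | MonotoneOn x S ∧ MonotoneOn x T} ≤
      (a + #S - 1).choose #S * (a + #(T \ S) - 1).choose #(T \ S) * a ^ #(S ∪ T \ S)ᶜ := by
    refine le_trans (card_le_card fun x hx => ?_) card_monotoneOn_monotoneOn_le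
    simp only [mem_filter, mem_univ, true_and] at hx ⊢
    exact ⟨hx.1, hx.2.mono (by simp)⟩
  have hn : #(S ∪ T \ S)ᶜ + (#S + #(T \ S)) = Fintype.card ι := by
    rw [card_compl, ← card_union_of_disjoint disjoint_sdiff]
    exact Nat.sub_add_cancel (card_le_univ _)
  have ha : (a : ℝ) ≠ 0 := by simp [a]
  calc ((a : ℝ)⁻¹) ^ Fintype.card ι * #{x : ι → α | MonotoneOn x S ∧ MonotoneOn x T}
      ≤ (a : ℝ)⁻¹ ^ Fintype.card ι * ((a + #S - 1).choose #S *
          (a + #(T \ S) - 1).choose #(T \ S) * a ^ #(S ∪ T \ S)ᶜ) := by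
        gcongr
        exact_mod_cast hcount
    _ = _ := by
      rw [← hn, inv_pow, pow_add]
      field_simp

theorem sum_card_filter_sq {X Y : Type*} [Fintype X] (s : Finset Y) (P : Y → X → Prop)
    [∀ y, DecidablePred (P y)] :
    ∑ x, #{y ∈ s | P y x} ^ 2 = ∑ y ∈ s, ∑ z ∈ s, #{x | P y x ∧ P z x} := by
  simp_rw [sq, card_filter, sum_mul_sum, ite_zero_mul_ite_zero, mul_one]
  rw [sum_comm]
  exact sum_congr rfl fun y _ => sum_comm

theorem sum_sdiff_eq_two_pow_card_smul [Fintype ι] [DecidableEq ι] {β : Type*} [AddCommMonoid β]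
    (S : Finset ι) (g : Finset ι → β) :
    ∑ T : Finset ι, g (T \ S) = 2 ^ #S • ∑ B ∈ Sᶜ.powerset, g B := by
  rw [← card_powerset, ← sum_const, ← sum_product']
  refine sum_nbij' (fun T => (T ∩ S, T \ S)) (fun p => p.1 ∪ p.2) ?_ ?_ ?_ ?_ ?_
  · simp
  · simp
  · intro T _
    rw [union_comm]
    exact sdiff_union_inter T S
  · rintro ⟨I, B⟩ h
    simp only [mem_product, mem_powerset, subset_compl_iff_disjoint_right] at h
    obtain ⟨hIS, hBS⟩ := h
    simp [union_inter_distrib_right, union_sdiff_distrib, inter_eq_left.2 hIS,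
      disjoint_iff_inter_eq_empty.1 hBS, sdiff_eq_empty_iff_subset.2 hIS,
      sdiff_eq_self_of_disjoint hBS]
  · simp

theorem sum_sum_sdiff_eq_sum_choose [Fintype ι] [DecidableEq ι] {R : Type*} [CommSemiring R]
    (w : ℕ → ℕ → R) :
    ∑ S : Finset ι, ∑ T : Finset ι, w #S #(T \ S) =
      ∑ k1 ∈ range (Fintype.card ι + 1), ∑ k2 ∈ range (Fintype.card ι + 1 - k1),
        2 ^ k1 * (Fintype.card ι).choose k1 * (Fintype.card ι - k1).choose k2 * w k1 k2 := by
  rw [sum_congr rfl fun S _ => sum_sdiff_eq_two_pow_card_smul S fun B => w #S #B]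
  simp_rw [sum_powerset_apply_card (w _), card_compl]
  rw [← powerset_univ, sum_powerset_apply_card (fun k1 => 2 ^ k1 • ∑ k2 ∈ range
    (Fintype.card ι - k1 + 1), (Fintype.card ι - k1).choose k2 • w k1 k2), card_univ]
  refine sum_congr rfl fun k1 hk1 => ?_
  rw [Nat.sub_add_comm (Nat.lt_succ_iff.1 (mem_range.1 hk1)), smul_sum, smul_sum]
  refine sum_congr rfl fun k2 _ => ?_
  simp only [nsmul_eq_mul]
  push_cast
  ring

end Counting

theorem sum_numWIS_eq_card_monotoneOn (n a : ℕ) (x : Fin n → Fin a) :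
    ∑ k ∈ range (n + 1), numWIS n a k x = #{S : Finset (Fin n) | MonotoneOn x S} := by
  simp only [numWIS, card_strictMono_monotone_comp_eq_card_monotoneOn]
  simpa using sum_card_filter_powersetCard (ι := Fin n) fun S => MonotoneOn x S

theorem expY2tot_uniform_eq (n a : ℕ) :
    expY2tot n a (fun _ => (a : ℝ)⁻¹) = (a : ℝ)⁻¹ ^ n *
      ∑ S : Finset (Fin n), ∑ T : Finset (Fin n),
        (#{x : Fin n → Fin a | MonotoneOn x S ∧ MonotoneOn x T} : ℝ) := by
  simp only [expY2tot, wordWt, prod_const, card_univ, Fintype.card_fin, ← mul_sum,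
    ← Nat.cast_sum, sum_numWIS_eq_card_monotoneOn]
  congr 1
  exact_mod_cast sum_card_filter_sq univ
    fun (S : Finset (Fin n)) (x : Fin n → Fin a) => MonotoneOn x ↑S

/-- upper bound for the second moment of the total number of weakly
increasing subsequences of a uniform random word. -/
theorem stmt6 (a : ℕ) (ha : 2 ≤ a) (n : ℕ) :
    expY2tot n a (fun _ => (a : ℝ)⁻¹)
      ≤ ∑ k1 ∈ Finset.range (n + 1), ∑ k2 ∈ Finset.range (n + 1 - k1),
          2 ^ k1 * ((a + k1 - 1).choose (a - 1) : ℝ) * ((a + k2 - 1).choose (a - 1) : ℝ)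
            * (n.choose k1 : ℝ) * ((n - k1).choose k2 : ℝ) * ((a : ℝ) ^ (k1 + k2))⁻¹ := by
  have : NeZero a := ⟨by omega⟩
  have hchoose (k : ℕ) : (a + k - 1).choose k = (a + k - 1).choose (a - 1) :=
    Nat.choose_symm_of_eq_add (by omega)
  calc expY2tot n a (fun _ => (a : ℝ)⁻¹)
      = ∑ S : Finset (Fin n), ∑ T : Finset (Fin n),
          (a : ℝ)⁻¹ ^ n * #{x : Fin n → Fin a | MonotoneOn x S ∧ MonotoneOn x T} := by
        simp_rw [expY2tot_uniform_eq, mul_sum]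
    _ ≤ ∑ S : Finset (Fin n), ∑ T : Finset (Fin n), ((a + #S - 1).choose #S : ℝ) *
          (a + #(T \ S) - 1).choose #(T \ S) * ((a : ℝ) ^ (#S + #(T \ S)))⁻¹ := by
        refine sum_le_sum fun S _ => sum_le_sum fun T _ => ?_
        simpa using inv_pow_mul_card_monotoneOn_monotoneOn_le (α := Fin a) S T
    _ = _ := by
        rw [sum_sum_sdiff_eq_sum_choose (fun k1 k2 => ((a + k1 - 1).choose k1 : ℝ) *
          (a + k2 - 1).choose k2 * ((a : ℝ) ^ (k1 + k2))⁻¹), Fintype.card_fin]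
        simp only [hchoose]
        refine sum_congr rfl fun k1 _ => sum_congr rfl fun k2 _ => ?_
        ring
end
end

section
/- Let a ≥ 2 and let X_1,…,X_n be i.i.d. uniform on {1,…,a}. Then the second moment of the total number of weakly increasing subsequences satisfies the lower bound E[(Y_n^{(a)})^2] ≥ Σ_{0 ≤ k_1 + k_2 ≤ n} C(a+k_1−1, a−1) · C(a+k_2−1, a−1) · C(n, k_2) · C(n−k_2, k_1) · a^{−(k_1+k_2)}, where the sum is over pairs of nonnegative integers (k_1, k_2) with k_1 + k_2 ≤ n. -/
/-!
Expanding the square, `a ^ n * E[Y²]` is the sum over `k₁, k₂` of the number of triples `(x, f, g)`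
where `f` and `g` index weakly increasing subsequences of lengths `k₁` and `k₂` of the word `x`.
Keep only the pairs `(f, g)` with disjoint images: there are at least `C(n, k₂) C(n - k₂, k₁)`
of them, and for each such pair the letters read by `f`, those read by `g` and the remaining
`n - k₁ - k₂` letters are independent, so the pair is counted by `M k₁ * M k₂ * a ^ (n - k₁ - k₂)`
words. Here `M k`, the number of weakly increasing words of length `k`, is at least the number
`C(a + k - 1, a - 1)` of multisets of `k` letters: sort each one.
-/

open Finset Filter

noncomputable section
attribute [local instance] Classical.propDecidable

-- Ending the section stops `Classical.propDecidable` from overriding the decidability instances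
-- that the lemmas below are stated with.
end

theorem Fintype.sum_comp_of_injective {ι κ α M : Type*} [Fintype ι] [Fintype κ] [Fintype α]
    [DecidableEq ι] [DecidableEq κ] [AddCommMonoid M] {e : ι → κ} (he : Function.Injective e)
    (F : (ι → α) → M) :
    ∑ x : κ → α, F (x ∘ e) = Fintype.card α ^ (Fintype.card κ - Fintype.card ι) • ∑ u, F u := by
  classical
  set σ := Equiv.ofInjective e he
  set split := Equiv.piEquivPiSubtypeProd (· ∈ Set.range e) fun _ => α
  have hcomp : ∀ y z, split.symm (y, z) ∘ e = y ∘ σ := by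
    intro y z; funext i; simp [split, Equiv.piEquivPiSubtypeProd, σ]
  rw [← split.symm.sum_comp, Fintype.sum_prod_type]
  simp only [hcomp, sum_const, card_univ, Fintype.card_fun, Fintype.card_subtype_compl,
    Set.card_range_of_injective he, ← smul_sum]
  exact congrArg _ ((σ.symm.arrowCongr (Equiv.refl α)).sum_comp F)

theorem card_filter_comp_and_comp_of_disjoint {ι₁ ι₂ κ α : Type*} [Fintype ι₁] [Fintype ι₂]
    [Fintype κ] [Fintype α] [DecidableEq ι₁] [DecidableEq ι₂] [DecidableEq κ]
    {f : ι₁ → κ} {g : ι₂ → κ} (hf : Function.Injective f) (hg : Function.Injective g)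
    (hfg : ∀ i j, f i ≠ g j) (P : (ι₁ → α) → Prop) (Q : (ι₂ → α) → Prop)
    [DecidablePred P] [DecidablePred Q] :
    #{x : κ → α | P (x ∘ f) ∧ Q (x ∘ g)}
      = #{u | P u} * #{v | Q v}
          * Fintype.card α ^ (Fintype.card κ - (Fintype.card ι₁ + Fintype.card ι₂)) := by
  let G : (ι₁ ⊕ ι₂ → α) → ℕ := fun w => if P (w ∘ Sum.inl) ∧ Q (w ∘ Sum.inr) then 1 else 0
  have hG : ∑ w, G w = #{u | P u} * #{v | Q v} := by
    rw [← (Equiv.sumArrowEquivProdArrow ι₁ ι₂ α).symm.sum_comp, Fintype.sum_prod_type,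
      card_filter, card_filter, sum_mul_sum]
    refine sum_congr rfl fun u _ => sum_congr rfl fun v _ => ?_
    change (if P u ∧ Q v then 1 else 0) = _
    rw [ite_zero_mul_ite_zero, mul_one]
  calc #{x : κ → α | P (x ∘ f) ∧ Q (x ∘ g)} = ∑ x : κ → α, G (x ∘ Sum.elim f g) := by
        rw [card_filter]; rfl
    _ = _ := by
        rw [Fintype.sum_comp_of_injective (hf.sumElim hg hfg), hG, Fintype.card_sum,
          smul_eq_mul, mul_comm]

theorem choose_card_le_card_strictMono {β : Type*} [LinearOrder β] [Fintype β] (s : Finset β)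
    (k : ℕ) : (#s).choose k ≤ #{f : Fin k → β | StrictMono f ∧ ∀ i, f i ∈ s} := by
  rw [← card_powersetCard]
  refine card_le_card_of_surjOn (fun f => univ.image f) fun t ht => ?_
  obtain ⟨hts, htk⟩ := mem_powersetCard.mp ht
  refine ⟨t.orderEmbOfFin htk, mem_coe.mpr (mem_filter.mpr ⟨mem_univ _, ?_⟩),
    image_orderEmbOfFin_univ t htk⟩
  exact ⟨(t.orderEmbOfFin htk).strictMono, fun i => hts (t.orderEmbOfFin_mem htk i)⟩

theorem choose_le_card_monotone (α : Type*) [LinearOrder α] [Fintype α] (k : ℕ) :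
    (Fintype.card α + k - 1).choose k ≤ #{u : Fin k → α | Monotone u} := by
  rw [← Sym.card_sym_eq_choose, ← card_univ]
  refine card_le_card_of_surjOn (fun u => Sym.ofVector (List.Vector.ofFn u)) fun s _ => ?_
  let v : List.Vector α k := ⟨s.1.sort, by rw [Multiset.length_sort, s.2]⟩
  refine ⟨v.get, mem_coe.mpr (mem_filter.mpr ⟨mem_univ _, ?_⟩), ?_⟩
  · exact fun i j hij => (Multiset.pairwise_sort s.1 _).rel_get_of_le hij
  · simp only [List.Vector.ofFn_get]
    exact Sym.ext (Multiset.sort_eq s.1 _)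

theorem sum_numWIS_mul_numWIS (n a k₁ k₂ : ℕ) :
    ∑ x : Fin n → Fin a, numWIS n a k₁ x * numWIS n a k₂ x
      = ∑ g : Fin k₂ → Fin n with StrictMono g, ∑ f : Fin k₁ → Fin n with StrictMono f,
          #{x : Fin n → Fin a | Monotone (x ∘ f) ∧ Monotone (x ∘ g)} := by
  calc ∑ x : Fin n → Fin a, numWIS n a k₁ x * numWIS n a k₂ x
      = ∑ x : Fin n → Fin a, ∑ g : Fin k₂ → Fin n with StrictMono g,
          ∑ f : Fin k₁ → Fin n with StrictMono f,
            if Monotone (x ∘ f) ∧ Monotone (x ∘ g) then 1 else 0 := by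
        refine sum_congr rfl fun x _ => ?_
        simp only [numWIS, ← filter_filter, card_filter, sum_mul_sum, ite_zero_mul_ite_zero,
          mul_one]
        exact sum_comm
    _ = _ := by
        rw [sum_comm]
        simp only [card_filter]
        exact sum_congr rfl fun g _ => sum_comm

theorem choose_mul_choose_mul_card_monotone_le_sum_numWIS_mul (n a k₁ k₂ : ℕ) :
    n.choose k₂ * ((n - k₂).choose k₁
        * (#{u : Fin k₁ → Fin a | Monotone u} * #{v : Fin k₂ → Fin a | Monotone v}
          * a ^ (n - (k₁ + k₂))))
      ≤ ∑ x : Fin n → Fin a, numWIS n a k₁ x * numWIS n a k₂ x := by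
  set C := #{u : Fin k₁ → Fin a | Monotone u} * #{v : Fin k₂ → Fin a | Monotone v}
    * a ^ (n - (k₁ + k₂))
  have hdisjoint : ∀ g : Fin k₂ → Fin n, StrictMono g → ∀ f : Fin k₁ → Fin n,
      (StrictMono f ∧ ∀ i, f i ∈ (univ.image g)ᶜ) →
        #{x : Fin n → Fin a | Monotone (x ∘ f) ∧ Monotone (x ∘ g)} = C := by
    intro g hg f ⟨hf, hfg⟩
    rw [card_filter_comp_and_comp_of_disjoint hf.injective hg.injective
      (fun i j h => by simpa [h] using hfg i)]
    simp only [Fintype.card_fin, C]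
  rw [sum_numWIS_mul_numWIS]
  calc n.choose k₂ * ((n - k₂).choose k₁ * C)
      ≤ ∑ g : Fin k₂ → Fin n with StrictMono g, (n - k₂).choose k₁ * C := by
        rw [sum_const, smul_eq_mul]
        gcongr
        simpa using choose_card_le_card_strictMono (univ : Finset (Fin n)) k₂
    _ ≤ ∑ g : Fin k₂ → Fin n with StrictMono g,
          ∑ f : Fin k₁ → Fin n with StrictMono f ∧ ∀ i, f i ∈ (univ.image g)ᶜ,
            #{x : Fin n → Fin a | Monotone (x ∘ f) ∧ Monotone (x ∘ g)} := by
        refine sum_le_sum fun g hg => ?_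
        rw [sum_congr rfl fun f hf => hdisjoint g (mem_filter.mp hg).2 f (mem_filter.mp hf).2,
          sum_const, smul_eq_mul]
        gcongr
        have hcard : #(univ.image g)ᶜ = n - k₂ := by
          rw [card_compl, card_image_of_injective _ (mem_filter.mp hg).2.injective,
            Fintype.card_fin, card_univ, Fintype.card_fin]
        simpa [hcard] using choose_card_le_card_strictMono (univ.image g)ᶜ k₁
    _ ≤ _ := by
        refine sum_le_sum fun g _ => sum_le_sum_of_subset ?_
        rw [← filter_filter]
        exact filter_subset _ _

theorem expY2tot_const (n a : ℕ) (c : ℝ) :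
    expY2tot n a (fun _ => c) = c ^ n * ∑ k₁ ∈ range (n + 1), ∑ k₂ ∈ range (n + 1),
      ((∑ x : Fin n → Fin a, numWIS n a k₁ x * numWIS n a k₂ x : ℕ) : ℝ) := by
  simp only [expY2tot, wordWt, prod_const, card_univ, Fintype.card_fin, ← mul_sum]
  congr 1
  simp only [sq, sum_mul_sum]
  push_cast
  rw [sum_comm]
  exact sum_congr rfl fun k₁ _ => sum_comm

theorem choose_le_card_monotone_fin {a : ℕ} (ha : 1 ≤ a) (k : ℕ) :
    (a + k - 1).choose (a - 1) ≤ #{u : Fin k → Fin a | Monotone u} := by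
  rw [Nat.choose_symm_of_eq_add (by omega : a + k - 1 = a - 1 + k)]
  simpa using choose_le_card_monotone (Fin a) k

theorem choose_mul_choose_mul_inv_pow_le_sum_numWIS_mul {n a k₁ k₂ : ℕ} (ha : 1 ≤ a)
    (hk : k₁ + k₂ ≤ n) :
    ((a + k₁ - 1).choose (a - 1) : ℝ) * ((a + k₂ - 1).choose (a - 1) : ℝ)
        * (n.choose k₂ : ℝ) * ((n - k₂).choose k₁ : ℝ) * ((a : ℝ) ^ (k₁ + k₂))⁻¹
      ≤ ((a : ℝ)⁻¹) ^ n * ((∑ x : Fin n → Fin a, numWIS n a k₁ x * numWIS n a k₂ x : ℕ) : ℝ) := by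
  have hcount : (a + k₁ - 1).choose (a - 1) * (a + k₂ - 1).choose (a - 1) * n.choose k₂
      * (n - k₂).choose k₁ * a ^ (n - (k₁ + k₂))
        ≤ ∑ x : Fin n → Fin a, numWIS n a k₁ x * numWIS n a k₂ x := by
    refine le_trans ?_ (choose_mul_choose_mul_card_monotone_le_sum_numWIS_mul n a k₁ k₂)
    calc _ = n.choose k₂ * ((n - k₂).choose k₁ * ((a + k₁ - 1).choose (a - 1)
          * (a + k₂ - 1).choose (a - 1) * a ^ (n - (k₁ + k₂)))) := by ring
      _ ≤ _ := by gcongr <;> exact choose_le_card_monotone_fin ha _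
  have hpow : (a : ℝ) ^ n = a ^ (k₁ + k₂) * a ^ (n - (k₁ + k₂)) := by
    rw [← pow_add, Nat.add_sub_of_le hk]
  have ha₀ : (a : ℝ) ≠ 0 := by positivity
  calc _ = ((a : ℝ)⁻¹) ^ n * (((a + k₁ - 1).choose (a - 1) * (a + k₂ - 1).choose (a - 1)
        * n.choose k₂ * (n - k₂).choose k₁ * a ^ (n - (k₁ + k₂)) : ℕ) : ℝ) := by
        rw [inv_pow, hpow]
        push_cast
        field_simp
    _ ≤ _ := by gcongr

/-- lower bound for the second moment of the total number of weakly
increasing subsequences of a uniform random word. -/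
theorem stmt7 (a : ℕ) (ha : 2 ≤ a) (n : ℕ) :
    ∑ k1 ∈ Finset.range (n + 1), ∑ k2 ∈ Finset.range (n + 1 - k1),
        ((a + k1 - 1).choose (a - 1) : ℝ) * ((a + k2 - 1).choose (a - 1) : ℝ)
          * (n.choose k2 : ℝ) * ((n - k2).choose k1 : ℝ) * ((a : ℝ) ^ (k1 + k2))⁻¹
      ≤ expY2tot n a (fun _ => (a : ℝ)⁻¹) := by
  rw [expY2tot_const, mul_sum]
  refine sum_le_sum fun k₁ _ => ?_
  rw [mul_sum]
  calc _ ≤ ∑ k₂ ∈ range (n + 1 - k₁), ((a : ℝ)⁻¹) ^ n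
        * ((∑ x : Fin n → Fin a, numWIS n a k₁ x * numWIS n a k₂ x : ℕ) : ℝ) :=
        sum_le_sum fun k₂ hk₂ => choose_mul_choose_mul_inv_pow_le_sum_numWIS_mul (by omega)
          (by rw [mem_range] at hk₂; omega)
    _ ≤ _ := sum_le_sum_of_subset_of_nonneg (range_subset_range.mpr (by omega))
          fun _ _ _ => by positivity
end

section
/- Let a ≥ 2, let p = (p_1,…,p_a) be a probability vector, let Y_{n,k}^{(p)} be the number of weakly increasing subsequences of length k of the i.i.d. word X_1,…,X_n with P(X_1ute = j) = p_j, and let Z_{n,k} be the number of increasing subsequences of length k of an independent uniformly random permutation of {1,…,n}. Then the total variation distance between the laws of these integer-valued random variables satisfies d_TV(Y_{n,k}^{(p)}, Z_{n,k}) ≤ C(n,2) · Σ_{i=1}^a p_i^2. Moreover, when p is the uniform distribution on {1,…,a} and a ≥ n, the bound improves to d_TV(Y_{n,k}^{(a)}, Z_{n,k}) ≤ 1 − a!/((a−n)! · a^n). -/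
open Finset Filter

noncomputable section
attribute [local instance] Classical.propDecidable

/-- Number of increasing subsequences of length `k` of the permutation `π`. -/
def numIS (n k : ℕ) (π : Equiv.Perm (Fin n)) : ℕ :=
  (univ.filter fun f : Fin k → Fin n => StrictMono f ∧ StrictMono (fun i => π (f i))).card

/-!
Condition on the letters of the word being distinct. Given that, the word is the increasing
enumeration of its set of letters composed with a permutation, and this permutation is uniform and
independent of the set of letters, because the weight of a word only depends on its set of
letters. On such words the weakly increasing subsequences are exactly the increasing subsequences of
the permutation, so the two laws differ by at most the probability that the word repeats a letter.
By the union bound over pairs of positions this is at most `C(n,2) ∑ pᵢ²`; for the uniform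
distribution it is exactly `1 - a!/((a-n)! aⁿ)`.
-/

open Function

section

variable {n a : ℕ}

lemma sum_le_sum_sum_filter {α ι M : Type*} [AddCommMonoid M] [PartialOrder M]
    [IsOrderedAddMonoid M] {s : Finset α} {I : Finset ι} {P : ι → α → Prop}
    [∀ i, DecidablePred (P i)] {f : α → M} (hf : ∀ x ∈ s, 0 ≤ f x)
    (hs : ∀ x ∈ s, ∃ i ∈ I, P i x) :
    ∑ x ∈ s, f x ≤ ∑ i ∈ I, ∑ x ∈ s with P i x, f x := by
  calc ∑ x ∈ s, f x ≤ ∑ x ∈ s, ∑ i ∈ I, if P i x then f x else 0 := by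
        refine sum_le_sum fun x hx => ?_
        obtain ⟨i, hi, hPi⟩ := hs x hx
        calc f x = if P i x then f x else 0 := (if_pos hPi).symm
          _ ≤ ∑ j ∈ I, if P j x then f x else 0 :=
            single_le_sum (f := fun j => if P j x then f x else 0)
              (fun j _ => by split_ifs <;> simp [hf x hx]) hi
    _ = ∑ i ∈ I, ∑ x ∈ s with P i x, f x := by
        rw [sum_comm]
        simp only [sum_filter]

lemma abs_mul_add_sub_le {R : Type*} [CommRing R] [LinearOrder R] [IsStrictOrderedRing R]
    {t q b : R} (ht₀ : 0 ≤ t) (ht₁ : t ≤ 1) (hb₀ : 0 ≤ b) (hb : b ≤ 1 - q) :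
    |t * q + b - t| ≤ 1 - q := by
  rw [abs_le]
  constructor <;> nlinarith

lemma wordWt_nonneg {p : Fin a → ℝ} (hp₀ : ∀ j, 0 ≤ p j) (x : Fin n → Fin a) :
    0 ≤ wordWt p x :=
  prod_nonneg fun i _ => hp₀ (x i)

lemma sum_wordWt_eq_one {p : Fin a → ℝ} (hp : ∑ j, p j = 1) :
    ∑ x : Fin n → Fin a, wordWt p x = 1 := by
  simp only [wordWt]
  rw [← Fintype.prod_sum]
  simp [hp]

lemma sum_wordWt_filter_forall_eq {p : Fin a → ℝ} (hp : ∑ j, p j = 1) (T : Finset (Fin n))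
    (c : Fin a) : ∑ x with ∀ l ∈ T, x l = c, wordWt p x = p c ^ #T := by
  set g : Fin n → Fin a → ℝ := fun l v => if l ∈ T ∧ v ≠ c then 0 else p v
  have hg : ∀ x : Fin n → Fin a,
      ∏ l, g l (x l) = if ∀ l ∈ T, x l = c then wordWt p x else 0 := by
    intro x
    split_ifs with hx
    · exact prod_congr rfl fun l _ => if_neg fun h => h.2 (hx l h.1)
    · push Not at hx
      obtain ⟨l, hl, hlc⟩ := hx
      exact prod_eq_zero (mem_univ l) (if_pos ⟨hl, hlc⟩)
  have hsum : ∀ l, ∑ v, g l v = if l ∈ T then p c else 1 := by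
    intro l
    split_ifs with hl
    · simp [g, hl]
    · simp [g, hl, hp]
  rw [sum_filter, ← sum_congr rfl fun x _ => hg x, ← Fintype.prod_sum,
    prod_congr rfl fun l _ => hsum l, prod_ite_mem, univ_inter, prod_const]

lemma sum_wordWt_filter_constant_on {p : Fin a → ℝ} (hp : ∑ j, p j = 1) {T : Finset (Fin n)}
    (hT : T.Nonempty) :
    ∑ x with ∀ i ∈ T, ∀ j ∈ T, x i = x j, wordWt p x = ∑ c, p c ^ #T := by
  obtain ⟨i₀, hi₀⟩ := hT
  rw [← sum_fiberwise _ (fun x => x i₀)]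
  refine sum_congr rfl fun c _ => ?_
  rw [filter_filter, ← sum_wordWt_filter_forall_eq hp T c]
  congr 1
  ext x
  simp only [mem_filter, mem_univ, true_and]
  exact ⟨fun ⟨h, hc⟩ l hl => hc ▸ h l hl i₀ hi₀,
    fun h => ⟨fun i hi j hj => (h i hi).trans (h j hj).symm, h i₀ hi₀⟩⟩

lemma sum_wordWt_filter_not_injective_le {p : Fin a → ℝ} (hp₀ : ∀ j, 0 ≤ p j)
    (hp : ∑ j, p j = 1) :
    ∑ x : Fin n → Fin a with ¬ Injective x, wordWt p x ≤ n.choose 2 * ∑ c, p c ^ 2 := by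
  set N : Finset (Fin n → Fin a) := univ.filter fun x => ¬ Injective x
  have hcover : ∀ x ∈ N,
      ∃ T ∈ powersetCard 2 univ, ∀ i ∈ T, ∀ j ∈ T, x i = x j := by
    intro x hx
    obtain ⟨i, j, hxij, hij⟩ := not_injective_iff.mp (mem_filter.mp hx).2
    refine ⟨{i, j}, mem_powersetCard.mpr ⟨subset_univ _, card_pair hij⟩, ?_⟩
    simp [hxij]
  calc ∑ x ∈ N, wordWt p x
      ≤ ∑ T ∈ powersetCard 2 univ,
          ∑ x ∈ N with ∀ i ∈ T, ∀ j ∈ T, x i = x j, wordWt p x :=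
        sum_le_sum_sum_filter (fun x _ => wordWt_nonneg hp₀ x) hcover
    _ ≤ ∑ T ∈ powersetCard 2 univ,
          ∑ x with ∀ i ∈ T, ∀ j ∈ T, x i = x j, wordWt p x :=
        sum_le_sum fun T _ => sum_le_sum_of_subset_of_nonneg
          (filter_subset_filter _ (subset_univ _)) fun x _ _ => wordWt_nonneg hp₀ x
    _ = ∑ T ∈ powersetCard 2 (univ : Finset (Fin n)), ∑ c, p c ^ 2 := by
        refine sum_congr rfl fun T hT => ?_
        have hT2 := (mem_powersetCard.mp hT).2
        rw [sum_wordWt_filter_constant_on hp (card_pos.mp (by omega)), hT2]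
    _ = n.choose 2 * ∑ c, p c ^ 2 := by
        rw [sum_const, card_powersetCard, card_univ, Fintype.card_fin, nsmul_eq_mul]

lemma numWIS_strictMono_comp (k : ℕ) {e : Fin n → Fin a} (he : StrictMono e)
    (π : Equiv.Perm (Fin n)) : numWIS n a k (e ∘ π) = numIS n k π := by
  unfold numWIS numIS
  congr 1
  refine filter_congr fun f _ => and_congr_right fun hf => ?_
  have hinj : Injective (e ∘ π ∘ f) := he.injective.comp (π.injective.comp hf.injective)
  exact ⟨fun h _ _ hij => he.lt_iff_lt.mp (h.strictMono_of_injective hinj hij),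
    fun h => (he.comp h).monotone⟩

lemma wordWt_comp_perm (p : Fin a → ℝ) (x : Fin n → Fin a) (π : Equiv.Perm (Fin n)) :
    wordWt p (x ∘ π) = wordWt p x :=
  Equiv.prod_comp π fun i => p (x i)

lemma wordWt_orderEmbOfFin (p : Fin a → ℝ) (S : Finset (Fin a)) (hS : #S = n) :
    wordWt p (S.orderEmbOfFin hS) = ∏ s ∈ S, p s := by
  rw [wordWt, ← prod_image fun i _ j _ h => (S.orderEmbOfFin hS).injective h,
    image_orderEmbOfFin_univ]

lemma sum_filter_injective_eq {M : Type*} [AddCommMonoid M] (F : (Fin n → Fin a) → M) :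
    ∑ x with Injective x, F x = ∑ S : {S : Finset (Fin a) // #S = n},
      ∑ π : Equiv.Perm (Fin n), F (S.1.orderEmbOfFin S.2 ∘ π) := by
  rw [← Fintype.sum_prod_type']
  symm
  refine sum_bij (fun q _ => q.1.1.orderEmbOfFin q.1.2 ∘ q.2) (fun q _ => ?_) ?_ ?_
    fun _ _ => rfl
  · simpa using (q.1.1.orderEmbOfFin q.1.2).injective.comp q.2.injective
  · rintro ⟨⟨S, hS⟩, π⟩ - ⟨⟨S', hS'⟩, π'⟩ - h
    have hSS : S = S' := by
      have := congrArg Set.range h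
      simpa [EquivLike.range_comp, range_orderEmbOfFin] using this
    subst hSS
    simp only [Prod.mk.injEq, true_and]
    exact Equiv.ext fun i => (S.orderEmbOfFin hS).injective (congrFun h i)
  · intro x hx
    have hx : Injective x := (mem_filter.mp hx).2
    set S := univ.image x
    have hS : #S = n := by rw [card_image_of_injective _ hx, card_univ, Fintype.card_fin]
    let σ : Fin n → Fin n := fun i =>
      (S.orderIsoOfFin hS).symm ⟨x i, mem_image_of_mem x (mem_univ i)⟩
    have hσ : Injective σ := fun i j h =>
      hx (congrArg Subtype.val ((S.orderIsoOfFin hS).symm.injective h))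
    refine ⟨(⟨S, hS⟩, Equiv.ofBijective σ hσ.bijective_of_finite), mem_univ _,
      funext fun i => ?_⟩
    show S.orderEmbOfFin hS (σ i) = x i
    rw [← coe_orderIsoOfFin_apply, OrderIso.apply_symm_apply]

lemma sum_filter_injective_ite_numWIS_mem (k : ℕ) (p : Fin a → ℝ) (A : Set ℕ) :
    ∑ x with Injective x, (if numWIS n a k x ∈ A then wordWt p x else 0) =
      #{π | numIS n k π ∈ A} * ∑ S : {S : Finset (Fin a) // #S = n}, ∏ s ∈ S.1, p s := by
  rw [sum_filter_injective_eq, mul_sum]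
  refine sum_congr rfl fun S _ => ?_
  simp only [numWIS_strictMono_comp k (S.1.orderEmbOfFin S.2).strictMono, wordWt_comp_perm,
    wordWt_orderEmbOfFin]
  rw [← sum_filter, sum_const, nsmul_eq_mul]

lemma sum_filter_injective_ite_numWIS_mem_eq (k : ℕ) (p : Fin a → ℝ) (A : Set ℕ) :
    ∑ x with Injective x, (if numWIS n a k x ∈ A then wordWt p x else 0) =
      #{π | numIS n k π ∈ A} / n.factorial *
        ∑ x : Fin n → Fin a with Injective x, wordWt p x := by
  have hinj := sum_filter_injective_ite_numWIS_mem k p (n := n) Set.univ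
  simp only [Set.mem_univ, if_true, filter_true, card_univ, Fintype.card_perm,
    Fintype.card_fin] at hinj
  rw [hinj, sum_filter_injective_ite_numWIS_mem]
  field_simp

theorem abs_sum_ite_numWIS_mem_sub_le (k : ℕ) {p : Fin a → ℝ} (hp₀ : ∀ j, 0 ≤ p j)
    (hp : ∑ j, p j = 1) (A : Set ℕ) :
    |(∑ x : Fin n → Fin a, if numWIS n a k x ∈ A then wordWt p x else 0)
      - (∑ π : Equiv.Perm (Fin n), if numIS n k π ∈ A then ((n.factorial : ℝ))⁻¹ else 0)|
      ≤ ∑ x : Fin n → Fin a with ¬ Injective x, wordWt p x := by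
  set t : ℝ := #{π | numIS n k π ∈ A} / n.factorial
  have hperm : (∑ π : Equiv.Perm (Fin n),
      if numIS n k π ∈ A then ((n.factorial : ℝ))⁻¹ else 0) = t := by
    rw [← sum_filter, sum_const, nsmul_eq_mul, ← div_eq_mul_inv]
  have ht₁ : t ≤ 1 := by
    refine div_le_one_of_le₀ ?_ (by positivity)
    exact_mod_cast (card_filter_le _ _).trans_eq (by simp [Fintype.card_perm])
  have hmass := sum_filter_add_sum_filter_not univ (fun x : Fin n → Fin a => Injective x)
    (wordWt p)
  rw [sum_wordWt_eq_one hp] at hmass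
  rw [← sum_filter_add_sum_filter_not univ (fun x : Fin n → Fin a => Injective x),
    sum_filter_injective_ite_numWIS_mem_eq, hperm, eq_sub_of_add_eq' hmass]
  -- `P(Y ∈ A) = t q + b`, where `t = P(Z ∈ A)`, `q` is the mass of injective words and
  -- `0 ≤ b ≤ 1 - q`
  refine abs_mul_add_sub_le (by positivity) ht₁
    (sum_nonneg fun x _ => by split_ifs <;> simp [wordWt_nonneg hp₀]) ?_
  rw [← eq_sub_of_add_eq' hmass]
  exact sum_le_sum fun x _ => by split_ifs <;> simp [wordWt_nonneg hp₀]

lemma card_filter_injective : #{x : Fin n → Fin a | Injective x} = a.descFactorial n := by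
  rw [← Fintype.card_subtype, Fintype.card_congr (Equiv.subtypeInjectiveEquivEmbedding _ _),
    Fintype.card_embedding_eq, Fintype.card_fin, Fintype.card_fin]

lemma sum_wordWt_uniform_filter_not_injective (ha : 0 < a) (hna : n ≤ a) :
    ∑ x : Fin n → Fin a with ¬ Injective x, wordWt (fun _ => (a : ℝ)⁻¹) x
      = 1 - a.factorial / ((a - n).factorial * a ^ n) := by
  have hmass := sum_filter_add_sum_filter_not univ (fun x : Fin n → Fin a => Injective x)
    (wordWt fun _ => (a : ℝ)⁻¹)
  rw [sum_wordWt_eq_one (by simp [ha.ne'])] at hmass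
  have hdesc : (a.descFactorial n : ℝ) = a.factorial / (a - n).factorial := by
    rw [eq_div_iff (by positivity), mul_comm]
    exact_mod_cast Nat.factorial_mul_descFactorial hna
  rw [eq_sub_of_add_eq' hmass]
  have ha' : (a : ℝ) ≠ 0 := by positivity
  simp only [wordWt, prod_const, card_univ, Fintype.card_fin, sum_const, card_filter_injective,
    nsmul_eq_mul, hdesc, inv_pow]
  field_simp

end

theorem stmt16_general (n a k : ℕ) (ha : 2 ≤ a) :
    (∀ p : Fin a → ℝ, (∀ j, 0 ≤ p j) → ∑ j, p j = 1 →
      ∀ A : Set ℕ,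
        |(∑ x : Fin n → Fin a, if numWIS n a k x ∈ A then wordWt p x else 0)
          - (∑ π : Equiv.Perm (Fin n), if numIS n k π ∈ A then ((n.factorial : ℝ))⁻¹ else 0)|
        ≤ (n.choose 2 : ℝ) * ∑ i, p i ^ 2)
    ∧ (n ≤ a →
      ∀ A : Set ℕ,
        |(∑ x : Fin n → Fin a,
            if numWIS n a k x ∈ A then wordWt (fun _ => (a : ℝ)⁻¹) x else 0)
          - (∑ π : Equiv.Perm (Fin n), if numIS n k π ∈ A then ((n.factorial : ℝ))⁻¹ else 0)|
        ≤ 1 - (a.factorial : ℝ) / (((a - n).factorial : ℝ) * (a : ℝ) ^ n)) := by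
  refine ⟨fun p hp₀ hp A => (abs_sum_ite_numWIS_mem_sub_le k hp₀ hp A).trans
    (sum_wordWt_filter_not_injective_le hp₀ hp), fun hna A => ?_⟩
  have ha₀ : 0 < a := by omega
  rw [← sum_wordWt_uniform_filter_not_injective ha₀ hna]
  exact abs_sum_ite_numWIS_mem_sub_le k (fun _ => by positivity) (by simp [ha₀.ne']) A

/-- total variation bounds between the law of the number of weakly
increasing subsequences of length k of a random word and the law of the number of
increasing subsequences of length k of a uniformly random permutation. -/
theorem stmt16 (n a k : ℕ) (ha : 2 ≤ a) (hk : k ≤ n) :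
    (∀ p : Fin a → ℝ, (∀ j, 0 ≤ p j) → ∑ j, p j = 1 →
      ∀ A : Set ℕ,
        |(∑ x : Fin n → Fin a, if numWIS n a k x ∈ A then wordWt p x else 0)
          - (∑ π : Equiv.Perm (Fin n), if numIS n k π ∈ A then ((n.factorial : ℝ))⁻¹ else 0)|
        ≤ (n.choose 2 : ℝ) * ∑ i, p i ^ 2)
    ∧ (n ≤ a →
      ∀ A : Set ℕ,
        |(∑ x : Fin n → Fin a,
            if numWIS n a k x ∈ A then wordWt (fun _ => (a : ℝ)⁻¹) x else 0)
          - (∑ π : Equiv.Perm (Fin n), if numIS n k π ∈ A then ((n.factorial : ℝ))⁻¹ else 0)|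
        ≤ 1 - (a.factorial : ℝ) / (((a - n).factorial : ℝ) * (a : ℝ) ^ n)) :=
  stmt16_general n a k ha
end
end
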